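/- General coupled MLMF variance formula: for any coefficients a_1, …, a_{L−1} ∈ ℝ, the MLMF estimator Y = P_L^{(N_L)} + Σ_{l=1}^{L−1} a_l (P_l^{(N_l)} − P_l^{(N_{l+1})}) satisfies Var(Y) = σ_L²/N_L + Σ_{l=1}^{L−1} (1/N_{l+1} − 1/N_l)(a_l² σ_l² − 2 a_l σ_l σ_L ρ_{l,L}). -/

import Mathlib

/-!
Write the estimator as `P_L^{(N_L)} + Σ a_l Δ_l` with corrections
`Δ_l = P_l^{(N_l)} - P_l^{(N_{l+1})}` and expand the variance bilinearly. Since the samples are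
uncorrelated across `j` and the sample means are nested (they share their first `min n n'`
samples), `Cov(P_k^{(n)}, P_m^{(n')}) = C_{km} / max n n'`, where `C` is the covariance matrix of
`Z_1`. With `N` decreasing this makes corrections of different levels uncorrelated and gives
`Var Δ_l = σ_l² (1/N_{l+1} - 1/N_l)` and `Cov(P_L^{(N_L)}, Δ_l) = C_{lL} (1/N_l - 1/N_{l+1})`.
-/

open MeasureTheory ProbabilityTheory Finset

/-- Sample mean of the first `n` samples of the sequence `X`. -/
noncomputable def sampleMean {Ω : Type} (n : ℕ) (X : ℕ → Ω → ℝ) : Ω → ℝ :=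
  fun ω => (n : ℝ)⁻¹ * ∑ j ∈ Finset.range n, X j ω

/-- Covariance of two real random variables. -/
noncomputable def covar {Ω : Type} [MeasurableSpace Ω] (μ : Measure Ω) (X Y : Ω → ℝ) : ℝ :=
  ∫ ω, (X ω - μ[X]) * (Y ω - μ[Y]) ∂μ

lemma mem_Icc_of_mem_Icc_sub_one {l L : ℕ} (hl : l ∈ Icc 1 (L - 1)) :
    l ∈ Icc 1 L ∧ l + 1 ∈ Icc 1 L := by
  simp only [mem_Icc] at hl ⊢
  omega

lemma antitoneOn_Icc_of_succ_le {α : Type*} [Preorder α] {f : ℕ → α} {m n : ℕ}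
    (hf : ∀ k ∈ Icc m (n - 1), f (k + 1) ≤ f k) : AntitoneOn f (Icc m n : Set ℕ) :=
  antitoneOn_of_succ_le (by rw [coe_Icc]; exact Set.ordConnected_Icc) fun k _ hk hk' => by
    simp only [Order.succ_eq_add_one, coe_Icc, Set.mem_Icc] at hk hk'
    exact hf k (mem_Icc.2 ⟨hk.1, by omega⟩)

namespace ProbabilityTheory

section General

variable {Ω : Type*} [MeasurableSpace Ω] {μ : Measure Ω}

lemma IdentDistrib.covariance_eq {Ω' : Type*} [MeasurableSpace Ω'] {ν : Measure Ω'}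
    {X Y : Ω → ℝ} {X' Y' : Ω' → ℝ}
    (h : IdentDistrib (fun ω => (X ω, Y ω)) (fun ω => (X' ω, Y' ω)) μ ν) :
    cov[X, Y; μ] = cov[X', Y'; ν] := by
  have hX : μ[X] = ν[X'] := (h.comp measurable_fst).integral_eq
  have hY : μ[Y] = ν[Y'] := (h.comp measurable_snd).integral_eq
  rw [covariance, covariance, hX, hY]
  exact (h.comp (u := fun p : ℝ × ℝ => (p.1 - ν[X']) * (p.2 - ν[Y'])) (by fun_prop)).integral_eq

lemma iIndepFun.covariance_eval_eval {ι : Type*} [IsProbabilityMeasure μ] {Z : ℕ → Ω → ι → ℝ}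
    (hindep : iIndepFun Z μ) (hident : ∀ j, IdentDistrib (Z j) (Z 0) μ μ) {k m : ι}
    (hk : ∀ j, MemLp (fun ω => Z j ω k) 2 μ) (hm : ∀ j, MemLp (fun ω => Z j ω m) 2 μ) (i j : ℕ) :
    cov[fun ω => Z i ω k, fun ω => Z j ω m; μ]
      = if i = j then cov[fun ω => Z 0 ω k, fun ω => Z 0 ω m; μ] else 0 := by
  split_ifs with hij
  · subst hij
    exact ((hident i).comp (u := fun x : ι → ℝ => (x k, x m)) (by fun_prop)).covariance_eq
  · exact ((hindep.indepFun hij).comp (measurable_pi_apply k)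
      (measurable_pi_apply m)).covariance_eq_zero (hk i) (hm j)

lemma variance_fun_add_sum_mul {ι : Type*} [IsFiniteMeasure μ] {A : Ω → ℝ} {D : ι → Ω → ℝ}
    {s : Finset ι} (a : ι → ℝ) (hA : MemLp A 2 μ) (hD : ∀ i ∈ s, MemLp (D i) 2 μ) :
    Var[fun ω => A ω + ∑ i ∈ s, a i * D i ω; μ]
      = Var[A; μ] + 2 * ∑ i ∈ s, a i * cov[A, D i; μ]
        + ∑ i ∈ s, ∑ j ∈ s, a i * a j * cov[D i, D j; μ] := by
  have haD : ∀ i ∈ s, MemLp (fun ω => a i * D i ω) 2 μ := fun i hi => (hD i hi).const_mul (a i)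
  rw [variance_fun_add hA (memLp_finsetSum s haD), covariance_fun_sum_right' haD hA,
    variance_fun_sum' haD]
  simp only [covariance_const_mul_left, covariance_const_mul_right]
  congr 1
  exact sum_congr rfl fun i _ => sum_congr rfl fun j _ => by ring

end General

variable {Ω : Type} [MeasurableSpace Ω] {μ : Measure Ω}

lemma covar_eq_covariance (X Y : Ω → ℝ) : covar μ X Y = cov[X, Y; μ] := rfl

lemma memLp_sampleMean {X : ℕ → Ω → ℝ} (hX : ∀ i, MemLp (X i) 2 μ) (n : ℕ) :
    MemLp (sampleMean n X) 2 μ :=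
  (memLp_finsetSum (range n) fun i _ => hX i).const_mul _

section NestedSampleMeans

variable [IsFiniteMeasure μ] {X Y : ℕ → Ω → ℝ} {c : ℝ}
  (hX : ∀ i, MemLp (X i) 2 μ) (hY : ∀ j, MemLp (Y j) 2 μ)
  (hXY : ∀ i j, cov[X i, Y j; μ] = if i = j then c else 0)
include hX hY hXY

lemma covariance_sampleMean_sampleMean {n m : ℕ} (hn : 0 < n) (hm : 0 < m) :
    cov[sampleMean n X, sampleMean m Y; μ] = c / max n m := by
  have hsum : ∑ i ∈ range n, ∑ j ∈ range m, cov[X i, Y j; μ] = min n m * c := by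
    simp_rw [hXY, sum_ite_eq, ← sum_filter, filter_mem_eq_inter, range_inter_range, sum_const,
      card_range, nsmul_eq_mul]
  unfold sampleMean
  rw [covariance_const_mul_left, covariance_const_mul_right,
    covariance_fun_sum_fun_sum' (fun i _ => hX i) (fun j _ => hY j), hsum]
  rcases le_total n m with h | h
  · rw [min_eq_left (by exact_mod_cast h), max_eq_right h]
    field_simp
  · rw [min_eq_right (by exact_mod_cast h), max_eq_left h]
    field_simp

lemma covariance_sampleMean_sampleMean_sub {m n₁ n₂ : ℕ} (hm : 0 < m) (hmn : m ≤ n₂)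
    (hn : n₂ ≤ n₁) :
    cov[sampleMean m X, sampleMean n₁ Y - sampleMean n₂ Y; μ] = c / n₁ - c / n₂ := by
  rw [covariance_sub_right (memLp_sampleMean hX m) (memLp_sampleMean hY n₁)
      (memLp_sampleMean hY n₂),
    covariance_sampleMean_sampleMean hX hY hXY hm (hm.trans_le (hmn.trans hn)),
    covariance_sampleMean_sampleMean hX hY hXY hm (hm.trans_le hmn),
    max_eq_right (hmn.trans hn), max_eq_right hmn]

lemma covariance_sampleMean_sub_sampleMean_sub_of_le {n₁ n₂ m₁ m₂ : ℕ} (hm₂ : 0 < m₂)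
    (hm : m₂ ≤ m₁) (hmn : m₁ ≤ n₂) (hn : n₂ ≤ n₁) :
    cov[sampleMean n₁ X - sampleMean n₂ X, sampleMean m₁ Y - sampleMean m₂ Y; μ] = 0 := by
  have hm₁ : 0 < m₁ := hm₂.trans_le hm
  have hn₂ : 0 < n₂ := hm₁.trans_le hmn
  have hn₁ : 0 < n₁ := hn₂.trans_le hn
  rw [covariance_sub_sub (memLp_sampleMean hX n₁) (memLp_sampleMean hX n₂)
      (memLp_sampleMean hY m₁) (memLp_sampleMean hY m₂),
    covariance_sampleMean_sampleMean hX hY hXY hn₁ hm₁,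
    covariance_sampleMean_sampleMean hX hY hXY hn₁ hm₂,
    covariance_sampleMean_sampleMean hX hY hXY hn₂ hm₁,
    covariance_sampleMean_sampleMean hX hY hXY hn₂ hm₂,
    max_eq_left (hmn.trans hn), max_eq_left (hm.trans (hmn.trans hn)), max_eq_left hmn,
    max_eq_left (hm.trans hmn)]
  ring

lemma covariance_sampleMean_sub_sampleMean_sub_self {n₁ n₂ : ℕ} (hn₂ : 0 < n₂) (hn : n₂ ≤ n₁) :
    cov[sampleMean n₁ X - sampleMean n₂ X, sampleMean n₁ Y - sampleMean n₂ Y; μ]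
      = c / n₂ - c / n₁ := by
  have hn₁ : 0 < n₁ := hn₂.trans_le hn
  rw [covariance_sub_sub (memLp_sampleMean hX n₁) (memLp_sampleMean hX n₂)
      (memLp_sampleMean hY n₁) (memLp_sampleMean hY n₂),
    covariance_sampleMean_sampleMean hX hY hXY hn₁ hn₁,
    covariance_sampleMean_sampleMean hX hY hXY hn₁ hn₂,
    covariance_sampleMean_sampleMean hX hY hXY hn₂ hn₁,
    covariance_sampleMean_sampleMean hX hY hXY hn₂ hn₂, max_self, max_self, max_eq_left hn,
    max_eq_right hn]
  ring

end NestedSampleMeans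

section MLMF

/-- `X l j` is the `j`-th sample at level `l`. -/
noncomputable def mlmfCorrection (N : ℕ → ℕ) (X : ℕ → ℕ → Ω → ℝ) (l : ℕ) : Ω → ℝ :=
  sampleMean (N l) (X l) - sampleMean (N (l + 1)) (X l)

noncomputable def mlmfEstimator (N : ℕ → ℕ) (X : ℕ → ℕ → Ω → ℝ) (a : ℕ → ℝ) (L : ℕ) :
    Ω → ℝ :=
  fun ω => sampleMean (N L) (X L) ω + ∑ l ∈ Icc 1 (L - 1), a l * mlmfCorrection N X l ω

variable [IsFiniteMeasure μ] {X : ℕ → ℕ → Ω → ℝ} {C : ℕ → ℕ → ℝ} {L : ℕ} {N : ℕ → ℕ}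
  (hX : ∀ l ∈ Icc 1 L, ∀ j, MemLp (X l j) 2 μ)
  (hXC : ∀ k ∈ Icc 1 L, ∀ m ∈ Icc 1 L, ∀ i j, cov[X k i, X m j; μ] = if i = j then C k m else 0)
  (hN : AntitoneOn N (Icc 1 L : Set ℕ)) (hNpos : ∀ l ∈ Icc 1 L, 0 < N l)
include hX hXC hN hNpos

lemma covariance_sampleMean_mlmfCorrection {l : ℕ} (hl : l ∈ Icc 1 (L - 1)) :
    cov[sampleMean (N L) (X L), mlmfCorrection N X l; μ] = C L l / N l - C L l / N (l + 1) := by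
  obtain ⟨hl₁, hl₂⟩ := mem_Icc_of_mem_Icc_sub_one hl
  have hL : L ∈ Icc 1 L := mem_Icc.2 ⟨(mem_Icc.1 hl₂).1.trans (mem_Icc.1 hl₂).2, le_rfl⟩
  exact covariance_sampleMean_sampleMean_sub (hX L hL) (hX l hl₁) (hXC L hL l hl₁) (hNpos L hL)
    (hN hl₂ hL (mem_Icc.1 hl₂).2) (hN hl₁ hl₂ (Nat.le_succ l))

lemma covariance_mlmfCorrection_mlmfCorrection {l l' : ℕ} (hl : l ∈ Icc 1 (L - 1))
    (hl' : l' ∈ Icc 1 (L - 1)) :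
    cov[mlmfCorrection N X l, mlmfCorrection N X l'; μ]
      = if l = l' then C l l / N (l + 1) - C l l / N l else 0 := by
  obtain ⟨hl₁, hl₂⟩ := mem_Icc_of_mem_Icc_sub_one hl
  obtain ⟨hl'₁, hl'₂⟩ := mem_Icc_of_mem_Icc_sub_one hl'
  split_ifs with hll'
  · subst hll'
    exact covariance_sampleMean_sub_sampleMean_sub_self (hX l hl₁) (hX l hl₁) (hXC l hl₁ l hl₁)
      (hNpos _ hl₂) (hN hl₁ hl₂ (Nat.le_succ l))
  rcases lt_or_gt_of_ne hll' with hlt | hlt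
  · exact covariance_sampleMean_sub_sampleMean_sub_of_le (hX l hl₁) (hX l' hl'₁)
      (hXC l hl₁ l' hl'₁) (hNpos _ hl'₂) (hN hl'₁ hl'₂ (Nat.le_succ l')) (hN hl₂ hl'₁ hlt)
      (hN hl₁ hl₂ (Nat.le_succ l))
  · rw [covariance_comm]
    exact covariance_sampleMean_sub_sampleMean_sub_of_le (hX l' hl'₁) (hX l hl₁)
      (hXC l' hl'₁ l hl₁) (hNpos _ hl₂) (hN hl₁ hl₂ (Nat.le_succ l)) (hN hl'₂ hl₁ hlt)
      (hN hl'₁ hl'₂ (Nat.le_succ l'))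

theorem variance_mlmfEstimator (hL : 1 ≤ L) (a : ℕ → ℝ) :
    Var[mlmfEstimator N X a L; μ]
      = C L L / N L + ∑ l ∈ Icc 1 (L - 1),
          ((N (l + 1) : ℝ)⁻¹ - (N l : ℝ)⁻¹) * (a l ^ 2 * C l l - 2 * a l * C L l) := by
  have hLL : L ∈ Icc 1 L := mem_Icc.2 ⟨hL, le_rfl⟩
  have hvarL : Var[sampleMean (N L) (X L); μ] = C L L / N L := by
    rw [← covariance_self (memLp_sampleMean (hX L hLL) _).aemeasurable,
      covariance_sampleMean_sampleMean (hX L hLL) (hX L hLL) (hXC L hLL L hLL) (hNpos L hLL)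
        (hNpos L hLL), max_self]
  have hD : ∀ l ∈ Icc 1 (L - 1), MemLp (mlmfCorrection N X l) 2 μ := fun l hl =>
    have hl₁ := (mem_Icc_of_mem_Icc_sub_one hl).1
    (memLp_sampleMean (hX l hl₁) _).sub (memLp_sampleMean (hX l hl₁) _)
  unfold mlmfEstimator
  rw [variance_fun_add_sum_mul a (memLp_sampleMean (hX L hLL) _) hD, hvarL,
    sum_congr rfl fun l hl => by
      rw [covariance_sampleMean_mlmfCorrection hX hXC hN hNpos hl],
    sum_congr rfl fun l hl => sum_congr rfl fun l' hl' => by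
      rw [covariance_mlmfCorrection_mlmfCorrection hX hXC hN hNpos hl hl']]
  simp only [mul_ite, mul_zero, sum_ite_eq, sum_ite_mem, inter_self]
  rw [add_assoc, mul_sum, ← sum_add_distrib]
  congr 1
  refine sum_congr rfl fun l _ => ?_
  field_simp
  ring

end MLMF

end ProbabilityTheory

theorem stmt_7_general
    {Ω : Type} [MeasurableSpace Ω] (μ : Measure Ω) [IsProbabilityMeasure μ]
    (L : ℕ) (hL : 1 ≤ L)
    (Z : ℕ → Ω → ℕ → ℝ)
    (hindep : iIndepFun Z μ)
    (hident : ∀ j, IdentDistrib (Z j) (Z 0) μ μ)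
    (hL2 : ∀ j, ∀ l ∈ Finset.Icc 1 L, MemLp (fun ω => Z j ω l) 2 μ)
    (σ ρ : ℕ → ℝ)
    (hσ : ∀ l ∈ Finset.Icc 1 L, σ l = Real.sqrt (variance (fun ω => Z 0 ω l) μ))
    (hσpos : ∀ l ∈ Finset.Icc 1 L, 0 < σ l)
    (hρ : ∀ l ∈ Finset.Icc 1 L,
      ρ l = covar μ (fun ω => Z 0 ω l) (fun ω => Z 0 ω L) / (σ l * σ L))
    (N : ℕ → ℕ)
    (hNnest : ∀ l ∈ Finset.Icc 1 (L - 1), N (l + 1) ≤ N l)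
    (hNLpos : 1 ≤ N L)
    (a : ℕ → ℝ) :
    variance (fun ω => sampleMean (N L) (fun j ω' => Z j ω' L) ω
        + ∑ l ∈ Finset.Icc 1 (L - 1),
            a l * (sampleMean (N l) (fun j ω' => Z j ω' l) ω
              - sampleMean (N (l + 1)) (fun j ω' => Z j ω' l) ω)) μ
      = (σ L) ^ 2 / N L
        + ∑ l ∈ Finset.Icc 1 (L - 1),
            ((N (l + 1) : ℝ)⁻¹ - (N l : ℝ)⁻¹)
              * ((a l) ^ 2 * (σ l) ^ 2 - 2 * a l * σ l * σ L * ρ l) := by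
  have hLL : L ∈ Icc 1 L := mem_Icc.2 ⟨hL, le_rfl⟩
  have hN : AntitoneOn N (Icc 1 L : Set ℕ) := antitoneOn_Icc_of_succ_le hNnest
  have hNpos : ∀ l ∈ Icc 1 L, 0 < N l := fun l hl => hNLpos.trans (hN hl hLL (mem_Icc.1 hl).2)
  have hvar : ∀ l ∈ Icc 1 L, covar μ (fun ω => Z 0 ω l) (fun ω => Z 0 ω l) = σ l ^ 2 :=
    fun l hl => by
      rw [covar_eq_covariance, covariance_self (hL2 0 l hl).aemeasurable, hσ l hl,
        Real.sq_sqrt (variance_nonneg _ _)]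
  have hcorr : ∀ l ∈ Icc 1 L,
      covar μ (fun ω => Z 0 ω L) (fun ω => Z 0 ω l) = σ l * σ L * ρ l := fun l hl => by
    rw [hρ l hl, mul_div_cancel₀ _ (mul_pos (hσpos l hl) (hσpos L hLL)).ne', covar_eq_covariance,
      covar_eq_covariance, covariance_comm]
  refine (variance_mlmfEstimator (X := fun l j ω => Z j ω l)
    (C := fun k m => covar μ (fun ω => Z 0 ω k) (fun ω => Z 0 ω m)) (fun l hl j => hL2 j l hl)
    (fun k hk m hm => hindep.covariance_eval_eval hident (hL2 · k hk) (hL2 · m hm)) hN hNpos hL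
    a).trans ?_
  rw [hvar L hLL]
  refine congrArg _ (sum_congr rfl fun l hl => ?_)
  obtain ⟨hl₁, -⟩ := mem_Icc_of_mem_Icc_sub_one hl
  simp only [hvar l hl₁, hcorr l hl₁]
  ring

/-- general coupled MLMF variance formula: for any coefficients
`a_1, …, a_{L−1} ∈ ℝ`, the coupled MLMF estimator
`Y = P_L^{(N_L)} + Σ_{l=1}^{L−1} a_l (P_l^{(N_l)} − P_l^{(N_{l+1})})` satisfies
`Var(Y) = σ_L²/N_L + Σ_{l=1}^{L−1} (1/N_{l+1} − 1/N_l)(a_l² σ_l² − 2 a_l σ_l σ_L ρ_{l,L})`. -/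
theorem stmt_7
    {Ω : Type} [MeasurableSpace Ω] (μ : Measure Ω) [IsProbabilityMeasure μ]
    (L : ℕ) (hL : 1 ≤ L)
    (Z : ℕ → Ω → ℕ → ℝ)
    (hmeas : ∀ j, Measurable (Z j))
    (hindep : iIndepFun Z μ)
    (hident : ∀ j, IdentDistrib (Z j) (Z 0) μ μ)
    (hL2 : ∀ j, ∀ l ∈ Finset.Icc 1 L, MemLp (fun ω => Z j ω l) 2 μ)
    (σ ρ : ℕ → ℝ)
    (hσ : ∀ l ∈ Finset.Icc 1 L, σ l = Real.sqrt (variance (fun ω => Z 0 ω l) μ))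
    (hσpos : ∀ l ∈ Finset.Icc 1 L, 0 < σ l)
    (hρ : ∀ l ∈ Finset.Icc 1 L,
      ρ l = covar μ (fun ω => Z 0 ω l) (fun ω => Z 0 ω L) / (σ l * σ L))
    (N : ℕ → ℕ)
    (hNnest : ∀ l ∈ Finset.Icc 1 (L - 1), N (l + 1) ≤ N l)
    (hNLpos : 1 ≤ N L)
    (a : ℕ → ℝ) :
    variance (fun ω => sampleMean (N L) (fun j ω' => Z j ω' L) ω
        + ∑ l ∈ Finset.Icc 1 (L - 1),
            a l * (sampleMean (N l) (fun j ω' => Z j ω' l) ω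
              - sampleMean (N (l + 1)) (fun j ω' => Z j ω' l) ω)) μ
      = (σ L) ^ 2 / N L
        + ∑ l ∈ Finset.Icc 1 (L - 1),
            ((N (l + 1) : ℝ)⁻¹ - (N l : ℝ)⁻¹)
              * ((a l) ^ 2 * (σ l) ^ 2 - 2 * a l * σ l * σ L * ρ l) :=
  stmt_7_general μ L hL Z hindep hident hL2 σ ρ hσ hσpos hρ N hNnest hNLpos a
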